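/- Let x, y be free with amalgamation over B in an operator-valued probability space, with E[x] and E[y] invertible. Then (I·Φ_{xy}^{→x})∘χ_{xy} = I·S_y, where Φ^{→x} = Σ_{n≥0} E[xy b_1 xy b_2 ··· xy b_n x] and χ_{xy} is the compositional inverse of I·Φ_{xy}. -/

import Mathlib

open scoped BigOperators

/-- A multilinear function series over `B`: a sequence of `n`-ary `B`-valued functions
(multilinearity is imposed separately via `MLS.IsMultilinear`). -/
abbrev MLS (B : Type*) : Type _ := ∀ n : ℕ, (Fin n → B) → B

namespace MLS

variable {B : Type*}

/-- The constant term `F₀` of a multilinear function series. -/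
def const (F : MLS B) : B := F 0 Fin.elim0

/-- `F` is a multilinear function series (over the base ring `R`): every component
agrees with an `R`-multilinear map. -/
def IsMultilinear (R : Type*) [CommRing R] {B : Type*} [Ring B] [Algebra R B]
    (F : MLS B) : Prop :=
  ∀ n : ℕ, ∃ M : MultilinearMap R (fun _ : Fin n => B) B, ∀ b : Fin n → B, M b = F n b

/-- Componentwise sum of multilinear function series. -/
def add [Ring B] (F G : MLS B) : MLS B := fun n b => F n b + G n b

/-- Dykema's product of multilinear function series:
`(F·G)ₙ(b₁,…,bₙ) = ∑ₖ Fₖ(b₁,…,bₖ)·G_{n-k}(b_{k+1},…,bₙ)`. -/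
def mul [Ring B] (F G : MLS B) : MLS B := fun n b =>
  ∑ k : Fin (n + 1),
    F k.val (fun i : Fin k.val => b (Fin.castLE (Nat.lt_succ_iff.mp k.isLt) i)) *
      G (n - k.val) (fun i : Fin (n - k.val) =>
        b ⟨k.val + i.val, by have h1 := i.isLt; have h2 := k.isLt; omega⟩)

/-- The unit series `1`, with constant term `1` and vanishing higher terms. -/
def one [Ring B] : MLS B := fun n _ => if n = 0 then 1 else 0

/-- The identity series `I`, with `I₁(b) = b` and all other components zero. -/
def idS [Ring B] : MLS B := fun n b => if h : n = 1 then b ⟨0, by omega⟩ else 0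

/-- Composition of multilinear function series (appropriate when `const G = 0`):
`(F∘G)ₙ(b₁,…,bₙ) = ∑_{p₁+⋯+p_k=n, pᵢ ≥ 1} F_k(G_{p₁}(…), …, G_{p_k}(…))`,
with `(F∘G)₀ = F₀`. -/
def comp [Ring B] (F G : MLS B) : MLS B := fun n b =>
  ∑ c : Composition n,
    F c.length (fun i : Fin c.length =>
      G (c.blocksFun i) (fun j : Fin (c.blocksFun i) => b (c.embedding i j)))

end MLS

/-- An operator-valued probability space: a unital algebra `A` with a distinguished
unital subalgebra (given by the embedding `ι : B →ₐ[R] A`) and a conditional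
expectation `E : A → B`. -/
structure OVPS (R A B : Type*) [CommRing R] [Ring A] [Algebra R A] [Ring B] [Algebra R B] where
  ι : B →ₐ[R] A
  E : A →ₗ[R] B
  E_ι : ∀ b : B, E (ι b) = b
  E_bimodule : ∀ (b₁ b₂ : B) (a : A), E (ι b₁ * a * ι b₂) = b₁ * E a * b₂

/-- The operator-valued moment series `Φ_x = ∑ₙ E[x b₁ x ⋯ bₙ x]` of a random variable. -/
def OVPS.momentSeries {R A B : Type*} [CommRing R] [Ring A] [Algebra R A] [Ring B] [Algebra R B]
    (P : OVPS R A B) (x : A) : MLS B :=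
  fun n b => P.E (x * (List.ofFn fun i : Fin n => P.ι (b i) * x).prod)

/-- The series `Φ^{→x} = ∑ₙ E[xy b₁ xy b₂ ⋯ xy bₙ x]`. -/
def OVPS.momentSeriesToX {R A B : Type*} [CommRing R] [Ring A] [Algebra R A]
    [Ring B] [Algebra R B] (P : OVPS R A B) (x y : A) : MLS B :=
  fun n b => P.E ((List.ofFn fun i : Fin n => x * y * P.ι (b i)).prod * x)

/-- The series `Φ^{y→} = ∑ₙ E[y b₁ xy b₂ xy ⋯ bₙ xy]`. -/
def OVPS.momentSeriesYTo {R A B : Type*} [CommRing R] [Ring A] [Algebra R A]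
    [Ring B] [Algebra R B] (P : OVPS R A B) (x y : A) : MLS B :=
  fun n b => P.E (y * (List.ofFn fun i : Fin n => P.ι (b i) * (x * y)).prod)


set_option linter.unusedSectionVars false in
section
namespace MLSAux


open MLS

variable {R B : Type*} [CommRing R] [Ring B] [Algebra R B]

theorem congr' (F : MLS B) {m n : ℕ} (h : m = n) {v : Fin m → B} {w : Fin n → B}
    (hv : ∀ (i : ℕ) (him : i < m) (hin : i < n), v ⟨i, him⟩ = w ⟨i, hin⟩) :
    F m v = F n w := by
  subst h
  congr 1
  ext ⟨i, hi⟩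
  exact hv i hi hi

theorem coord_zero {F : MLS B} (hF : MLS.IsMultilinear R F) {n : ℕ}
    {v : Fin n → B} (i : Fin n) (hv : v i = 0) : F n v = 0 := by
  obtain ⟨M, hM⟩ := hF n
  rw [← hM]
  exact M.map_coord_zero i hv

theorem idS_one {k : ℕ} (h : k = 1) (b : Fin k → B) :
    MLS.idS k b = b ⟨0, by omega⟩ := by subst h; rfl

theorem idS_ne_one {k : ℕ} (h : k ≠ 1) (b : Fin k → B) : MLS.idS k b = 0 := dif_neg h

theorem comp0_length (c : Composition 0) : c.length = 0 := by
  cases hb : c.blocks with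
  | nil => simp [Composition.length, hb]
  | cons a l =>
    have ha : 0 < a := c.blocks_pos (hb ▸ (List.mem_cons_self : a ∈ a :: l))
    have hs := c.blocks_sum
    rw [hb] at hs
    simp only [List.sum_cons] at hs
    omega

theorem idS_mul_zero (F : MLS B) (v : Fin 0 → B) : MLS.idS.mul F 0 v = 0 := by
  simp [MLS.mul, MLS.idS]

theorem idS_mul_succ (F : MLS B) (n : ℕ) (v : Fin (n + 1) → B) :
    MLS.idS.mul F (n + 1) v
      = v 0 * F n (fun i : Fin n => v ⟨1 + i.val, by omega⟩) := by
  rw [MLS.mul, Finset.sum_eq_single (⟨1, by omega⟩ : Fin (n + 2))]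
  · simp only [MLS.idS]
    norm_num
    congr 1
  · intro k _ hk
    have : (k : ℕ) ≠ 1 := fun h => hk (Fin.ext h)
    rw [idS_ne_one this, zero_mul]
  · intro h; exact absurd (Finset.mem_univ _) h

set_option linter.unusedSectionVars false

theorem idS_mul_multilinear {F : MLS B} (hF : MLS.IsMultilinear R F) :
    MLS.IsMultilinear R (MLS.idS.mul F) := by
  intro n
  cases n with
  | zero =>
    exact ⟨0, fun b => (idS_mul_zero F b).symm⟩
  | succ n =>
    obtain ⟨M, hM⟩ := hF n
    let L : B →ₗ[R] MultilinearMap R (fun _ : Fin n => B) B :=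
      { toFun := fun b₀ => (LinearMap.mulLeft R b₀).compMultilinearMap M
        map_add' := by intro a b; ext v; simp [add_mul]
        map_smul' := by intro r a; ext v; simp [smul_mul_assoc] }
    refine ⟨LinearMap.uncurryLeft L, fun b => ?_⟩
    rw [idS_mul_succ]
    show b 0 * M (fun i : Fin n => b i.succ) = _
    rw [hM]
    congr 1
    exact congrArg (F n) (funext fun i => congrArg b (Fin.ext (by simp [Fin.val_succ, Nat.add_comm])))

theorem comp_idS {F : MLS B} (hF : MLS.IsMultilinear R F) : F.comp MLS.idS = F := by
  funext n v
  show (∑ c : Composition n, F c.length (fun i : Fin c.length =>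
      MLS.idS (c.blocksFun i) (fun j => v (c.embedding i j)))) = F n v
  rw [Finset.sum_eq_single (Composition.ones n)]
  · apply congr' F (Composition.ones_length n)
    intro i hi1 hi2
    rw [idS_one (Composition.ones_blocksFun n ⟨i, hi1⟩)]
    refine congrArg v (Fin.ext ?_)
    simp [Composition.coe_embedding, Composition.ones_sizeUpTo]
  · intro c _ hc
    obtain ⟨k, hk, hlt⟩ := Composition.ne_ones_iff.1 hc
    obtain ⟨j, hj⟩ := List.get_of_mem hk
    refine coord_zero (R := R) hF j ?_
    apply idS_ne_one
    have : c.blocksFun j = k := hj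
    omega
  · intro h; exact absurd (Finset.mem_univ _) h

theorem idS_comp {G : MLS B} (hG : MLS.const G = 0) : MLS.idS.comp G = G := by
  funext n v
  show (∑ c : Composition n, MLS.idS c.length (fun i : Fin c.length =>
      G (c.blocksFun i) (fun j => v (c.embedding i j)))) = G n v
  match n with
  | 0 =>
    rw [Finset.sum_eq_zero (fun c _ => idS_ne_one (by rw [comp0_length c]; omega) _)]
    have hv : v = Fin.elim0 := funext fun i => i.elim0
    rw [hv]
    exact hG.symm
  | n + 1 =>
    rw [Finset.sum_eq_single (Composition.single (n + 1) (Nat.succ_pos n))]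
    · rw [idS_one (Composition.single_length (Nat.succ_pos n))]
      apply congr' G (Composition.single_blocksFun (Nat.succ_pos n) _)
      intro i hi1 hi2
      refine congrArg v (Fin.ext ?_)
      rw [Composition.coe_embedding]
      simp [Composition.sizeUpTo_zero]
    · intro c _ hc
      exact idS_ne_one (fun h => hc ((Composition.eq_single_iff_length (Nat.succ_pos n)).2 h)) _
    · intro h; exact absurd (Finset.mem_univ _) h

theorem comp_zero (F G : MLS B) (hF0 : ∀ w : Fin 0 → B, F 0 w = 0) :
    MLS.const (F.comp G) = 0 := by
  show (∑ c : Composition 0, F c.length (fun i : Fin c.length =>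
      G (c.blocksFun i) (fun j => Fin.elim0 (c.embedding i j)))) = 0
  refine Finset.sum_eq_zero fun c _ => ?_
  exact Eq.trans (congr' F (comp0_length c) (w := Fin.elim0)
    fun i h1 h2 => absurd h2 (by omega)) (hF0 _)

open Composition in
theorem comp_assoc {r : MLS B} (hr : MLS.IsMultilinear R r) (q p : MLS B) :
    (r.comp q).comp p = r.comp (q.comp p) := by
  funext n v
  let f : (Σ a : Composition n, Composition a.length) → B := fun c =>
    r c.2.length fun i : Fin c.2.length =>
      q (c.2.blocksFun i) fun j =>
        p (c.1.blocksFun (c.2.embedding i j)) fun k =>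
          v (c.1.embedding (c.2.embedding i j) k)
  let g : (Σ c : Composition n, ∀ i : Fin c.length, Composition (c.blocksFun i)) → B := fun c =>
    r c.1.length fun i : Fin c.1.length =>
      q (c.2 i).length fun j =>
        p ((c.2 i).blocksFun j) fun k =>
          v (c.1.embedding i ((c.2 i).embedding j k))
  have L : (r.comp q).comp p n v = ∑ c, f c := by
    rw [← Finset.univ_sigma_univ, Finset.sum_sigma]
    rfl
  have Rh : r.comp (q.comp p) n v = ∑ c, g c := by
    have key : ∀ c : Composition n,
        r c.length (fun i => (q.comp p) (c.blocksFun i) fun j => v (c.embedding i j))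
          = ∑ d : (∀ i : Fin c.length, Composition (c.blocksFun i)),
              g ⟨c, d⟩ := by
      intro c
      obtain ⟨M, hM⟩ := hr c.length
      rw [← hM]
      rw [show (fun i => (q.comp p) (c.blocksFun i) fun j => v (c.embedding i j))
          = fun i => ∑ d : Composition (c.blocksFun i),
              q d.length (fun j => p (d.blocksFun j) fun k => v (c.embedding i (d.embedding j k)))
          from rfl]
      rw [M.map_sum]
      exact Finset.sum_congr rfl fun d _ => hM _
    calc r.comp (q.comp p) n v
        = ∑ c : Composition n, r c.length
            (fun i => (q.comp p) (c.blocksFun i) fun j => v (c.embedding i j)) := rfl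
      _ = ∑ c : Composition n, ∑ d : (∀ i : Fin c.length, Composition (c.blocksFun i)),
            g ⟨c, d⟩ := Finset.sum_congr rfl fun c _ => key c
      _ = ∑ c, g c := by rw [← Finset.univ_sigma_univ, Finset.sum_sigma]
  rw [L, Rh, ← (sigmaEquivSigmaPi n).sum_comp]
  apply Finset.sum_congr rfl
  rintro ⟨a, b⟩ -
  show f ⟨a, b⟩ = g (sigmaEquivSigmaPi n ⟨a, b⟩)
  dsimp only [sigmaEquivSigmaPi, Equiv.coe_fn_mk, f, g]
  apply congr' r (Composition.length_gather a b).symm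
  intro i hi1 hi2
  apply congr' q (length_sigmaCompositionAux a b ⟨i, hi1⟩).symm
  intro j hj1 hj2
  apply congr' p (blocksFun_sigmaCompositionAux a b ⟨i, hi1⟩ ⟨j, hj1⟩).symm
  intro k hk1 hk2
  refine congrArg v (Fin.ext ?_)
  simp only [Composition.coe_embedding]
  rw [sizeUpTo_sizeUpTo_add _ _ hi1 hj1, add_assoc]

end MLSAux
end

/-- for `x, y` free with amalgamation over `B` (which yields the relation
`I·Φ_{xy} = (I·C_y)∘(I·Φ^{→x})`), one has `(I·Φ^{→x})∘χ_{xy} = I·S_y`, where `χ_{xy}` is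
the compositional inverse of `I·Φ_{xy}` and `I·S_y` is the compositional inverse of
`I·C_y`. -/
theorem ovps_phiToX_comp_chi {R A B : Type*} [CommRing R] [Ring A] [Algebra R A]
    [Ring B] [Algebra R B] (P : OVPS R A B) (x y : A)
    (hx : IsUnit (P.E x)) (hy : IsUnit (P.E y))
    (Cy Sy χ : MLS B)
    (hCy : MLS.IsMultilinear R Cy) (hSy : MLS.IsMultilinear R Sy)
    (hχm : MLS.IsMultilinear R χ)
    -- freeness relation: `I·Φ = (I·C_y)∘(I·Φ^{→x})`
    (hfree : MLS.idS.mul (P.momentSeries (x * y)) =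
      (MLS.idS.mul Cy).comp (MLS.idS.mul (P.momentSeriesToX x y)))
    -- `I·S_y` is the compositional inverse of `I·C_y`
    (hSy1 : (MLS.idS.mul Cy).comp (MLS.idS.mul Sy) = MLS.idS)
    (hSy2 : (MLS.idS.mul Sy).comp (MLS.idS.mul Cy) = MLS.idS)
    -- `χ = χ_{xy}` is the compositional inverse of `I·Φ_{xy}`
    (hχ0 : MLS.const χ = 0)
    (hχ1 : (MLS.idS.mul (P.momentSeries (x * y))).comp χ = MLS.idS)
    (hχ2 : χ.comp (MLS.idS.mul (P.momentSeries (x * y))) = MLS.idS) :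
    (MLS.idS.mul (P.momentSeriesToX x y)).comp χ = MLS.idS.mul Sy := by
  have hmulCy := MLSAux.idS_mul_multilinear (R := R) hCy
  have hmulSy := MLSAux.idS_mul_multilinear (R := R) hSy
  have h1 : ((MLS.idS.mul Cy).comp (MLS.idS.mul (P.momentSeriesToX x y))).comp χ = MLS.idS := by
    rw [← hfree]; exact hχ1
  rw [MLSAux.comp_assoc hmulCy _ _] at h1
  have hH0 : MLS.const ((MLS.idS.mul (P.momentSeriesToX x y)).comp χ) = 0 :=
    MLSAux.comp_zero _ _ (fun w => MLSAux.idS_mul_zero _ w)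
  calc (MLS.idS.mul (P.momentSeriesToX x y)).comp χ
      = MLS.idS.comp ((MLS.idS.mul (P.momentSeriesToX x y)).comp χ) :=
        (MLSAux.idS_comp hH0).symm
    _ = ((MLS.idS.mul Sy).comp (MLS.idS.mul Cy)).comp
          ((MLS.idS.mul (P.momentSeriesToX x y)).comp χ) := by rw [hSy2]
    _ = (MLS.idS.mul Sy).comp ((MLS.idS.mul Cy).comp
          ((MLS.idS.mul (P.momentSeriesToX x y)).comp χ)) := MLSAux.comp_assoc hmulSy _ _
    _ = (MLS.idS.mul Sy).comp MLS.idS := by rw [h1]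
    _ = MLS.idS.mul Sy := MLSAux.comp_idS hmulSy
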